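/- Let 0 < q < 1 and let A(ω) = a₁ω + a₀, B(ω) = b₂ω² + b₁ω + b₀ be complex polynomials with b₀ ≠ 0, b₂ ≠ 0, b₁ − (1−q)a₀ = 0 and b₂ − (1−q)a₁ = 0 (so that B(ω) − (1−q)ω·A(ω) = b₀ is constant). Write B(ω) = b₂(ω−a)(ω−b) with roots a, b ≠ 0. Then ϱ(ω) := (qω/a; q)_∞ · (qω/b; q)_∞ satisfies ϱ(ω)·(B(ω) − (1−q)ω·A(ω)) = B(qω)·ϱ(qω) for all ω ∈ ℂ. -/

import Mathlib

/-- The infinite q-Pochhammer symbol `(x; q)_∞ = ∏_{k=0}^∞ (1 − qᵏx)` over `ℂ`. -/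
noncomputable def qPoch (q : ℝ) (x : ℂ) : ℂ :=
  ∏' k : ℕ, (1 - (q : ℂ) ^ k * x)

lemma multipliable_one_sub_pow_mul {𝕜 : Type*} [NormedField 𝕜] [CompleteSpace 𝕜] {q : 𝕜}
    (hq : ‖q‖ < 1) (x : 𝕜) : Multipliable fun k : ℕ ↦ 1 - q ^ k * x := by
  simpa only [sub_eq_add_neg] using multipliable_one_add_of_summable (f := fun k ↦ -(q ^ k * x))
    (by simpa [norm_mul, norm_pow] using
      (summable_geometric_of_lt_one (norm_nonneg q) hq).mul_right ‖x‖)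

lemma qPoch_eq_one_sub_mul_qPoch_mul {q : ℝ} (hq : |q| < 1) (x : ℂ) :
    qPoch q x = (1 - x) * qPoch q ((q : ℂ) * x) := by
  have hq' : ‖(q : ℂ)‖ < 1 := by rwa [Complex.norm_real, Real.norm_eq_abs]
  have hshift : Multipliable fun k : ℕ ↦ 1 - (q : ℂ) ^ (k + 1) * x := by
    simpa only [pow_succ, mul_assoc] using multipliable_one_sub_pow_mul hq' ((q : ℂ) * x)
  unfold qPoch
  rw [tprod_eq_zero_mul' (f := fun k : ℕ ↦ 1 - (q : ℂ) ^ k * x) hshift]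
  simp only [pow_zero, one_mul, pow_succ, mul_assoc]

theorem stmt_8_general (q : ℝ) (hq0 : 0 < q) (hq1 : q < 1)
    (a₀ a₁ b₀ b₁ b₂ a b : ℂ)
    (A B : ℂ → ℂ)
    (hA : ∀ ω : ℂ, A ω = a₁ * ω + a₀)
    (hB : ∀ ω : ℂ, B ω = b₂ * ω ^ 2 + b₁ * ω + b₀)
    (hlin : b₁ - (1 - (q : ℂ)) * a₀ = 0) (hlead : b₂ - (1 - (q : ℂ)) * a₁ = 0)
    (ha : a ≠ 0) (hb : b ≠ 0)
    (hBroots : ∀ ω : ℂ, B ω = b₂ * (ω - a) * (ω - b))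
    (ϱ : ℂ → ℂ)
    (hϱ : ∀ ω : ℂ, ϱ ω = qPoch q ((q : ℂ) * ω / a) * qPoch q ((q : ℂ) * ω / b)) :
    ∀ ω : ℂ, ϱ ω * (B ω - (1 - (q : ℂ)) * ω * A ω) = B ((q : ℂ) * ω) * ϱ ((q : ℂ) * ω) := by
  intro ω
  have hq : |q| < 1 := abs_lt.2 ⟨by linarith, hq1⟩
  have hconst : B ω - (1 - (q : ℂ)) * ω * A ω = b₀ := by
    rw [hB, hA]
    linear_combination ω ^ 2 * hlead + ω * hlin
  have hb₀ : b₀ = b₂ * a * b := by simpa using (hB 0).symm.trans (hBroots 0)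
  -- peeling one factor off each Pochhammer symbol leaves `b₂ a b (1 - qω/a) (1 - qω/b) = B(qω)`
  rw [hconst, hb₀, hBroots, hϱ, hϱ, qPoch_eq_one_sub_mul_qPoch_mul hq (q * ω / a),
    qPoch_eq_one_sub_mul_qPoch_mul hq (q * ω / b), mul_div_assoc', mul_div_assoc']
  field_simp
  ring

/-- Let `0 < q < 1` and `A(ω) = a₁ω + a₀`, `B(ω) = b₂ω² + b₁ω + b₀` be
complex polynomials with `b₀ ≠ 0`, `b₂ ≠ 0`, `b₁ − (1−q)a₀ = 0` and `b₂ − (1−q)a₁ = 0`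
(so that `B(ω) − (1−q)ωA(ω) = b₀` is constant).  Write `B(ω) = b₂(ω−a)(ω−b)` with roots
`a, b ≠ 0`.  Then `ϱ(ω) = (qω/a;q)_∞(qω/b;q)_∞` satisfies
`ϱ(ω)(B(ω) − (1−q)ωA(ω)) = B(qω)ϱ(qω)` for all `ω ∈ ℂ`. -/
theorem stmt_8 (q : ℝ) (hq0 : 0 < q) (hq1 : q < 1)
    (a₀ a₁ b₀ b₁ b₂ a b : ℂ)
    (A B : ℂ → ℂ)
    (hA : ∀ ω : ℂ, A ω = a₁ * ω + a₀)
    (hB : ∀ ω : ℂ, B ω = b₂ * ω ^ 2 + b₁ * ω + b₀)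
    (hb₀ : b₀ ≠ 0) (hb₂ : b₂ ≠ 0)
    (hlin : b₁ - (1 - (q : ℂ)) * a₀ = 0) (hlead : b₂ - (1 - (q : ℂ)) * a₁ = 0)
    (ha : a ≠ 0) (hb : b ≠ 0)
    (hBroots : ∀ ω : ℂ, B ω = b₂ * (ω - a) * (ω - b))
    (ϱ : ℂ → ℂ)
    (hϱ : ∀ ω : ℂ, ϱ ω = qPoch q ((q : ℂ) * ω / a) * qPoch q ((q : ℂ) * ω / b)) :
    ∀ ω : ℂ, ϱ ω * (B ω - (1 - (q : ℂ)) * ω * A ω) = B ((q : ℂ) * ω) * ϱ ((q : ℂ) * ω) :=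
  stmt_8_general q hq0 hq1 a₀ a₁ b₀ b₁ b₂ a b A B hA hB hlin hlead ha hb hBroots ϱ hϱ
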